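/- Let N ≥ 2 be an integer, and for 0 ≤ n ≤ N−2 let a_n, b_n be real numbers and c_n complex numbers satisfying the reflection-symmetry conditions a_n = a_{N−2−n}, b_n = b_{N−2−n}, c_n = c_{N−2−n}. Take g = 1, so ψ^(1) = (e_{(0,1)} − e_{(1,0)})/√2. Define the operator H = Σ_{n=0}^{N−2} T_{n,n+1} on the N-qubit space, where T_{n,n+1} is the two-site embedding of the 4×4 matrix a_n|ψ^(1)⟩⟨ψ^(1)| + b_n|e_{(1,1)}⟩⟨e_{(1,1)}| + c_n|ψ^(1)⟩⟨e_{(1,1)}| + conj(c_n)|e_{(1,1)}⟩⟨ψ^(1)|. Let R be the reflection operator, (R v)(s) = v(s ∘ ρ) with ρ(j) = N−1−j, and let Π be the parity operator, (Π v)(s) = (−1)^{#{j : s(j) = 1}} v(s). Then (Π ∘ R) ∘ H ∘ (Π ∘ R) = H, even though in general R ∘ H ∘ R ≠ H. -/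

import Mathlib

/-!
At `g = 1` the vector `ψ^(1)` is the singlet: it is odd under the swap of its two qubits and
lies in the odd-parity sector, while `e_{(1,1)}` is even under both. So the bond operator
`(Z ⊗ Z) ∘ SWAP` fixes both vectors and hence every local term of `H`. Globally, `R` maps the
bond `(n, n+1)` to `(N-2-n, N-1-n)` with its sites swapped, and `Π` acts on a local term as
`Z ⊗ Z` on its bond, since the spins off the bond are unchanged. With reflection-symmetric
coefficients, `Π ∘ R` therefore just permutes the local terms. Without `Π` the term `c|ψ⟩⟨e₁₁|`
changes sign, so already for two sites `R H R ≠ H`.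
-/

open scoped BigOperators

noncomputable section

/-- The `N`-qubit space: complex functions on configurations `Fin N → Fin 2`. -/
abbrev NQubit (N : ℕ) : Type := (Fin N → Fin 2) → ℂ

/-- The two-qubit basis vector `e_{(a,b)}`. -/
def eBasis (a b : Fin 2) : Fin 2 × Fin 2 → ℂ := Pi.single (a, b) (1 : ℂ)

/-- The two-qubit vector `ψ^(g) = (conj g · e_{(0,1)} − e_{(1,0)}) / √(1+|g|²)`. -/
def psiVec (g : ℂ) : Fin 2 × Fin 2 → ℂ :=
  (Real.sqrt (1 + ‖g‖ ^ 2))⁻¹ •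
    ((starRingEnd ℂ g) • eBasis 0 1 - eBasis 1 0)

/-- The two-qubit basis vector `e_{(1,1)}`. -/
def e11 : Fin 2 × Fin 2 → ℂ := eBasis 1 1

/-- The rank-one matrix `|v⟩⟨w|`, with entries `v p * conj (w q)`. -/
def outer (v w : Fin 2 × Fin 2 → ℂ) : Matrix (Fin 2 × Fin 2) (Fin 2 × Fin 2) ℂ :=
  Matrix.vecMulVec v (star w)

/-- The 4×4 PVBS projector matrix `P^(g) = |e_{(1,1)}⟩⟨e_{(1,1)}| + |ψ^(g)⟩⟨ψ^(g)|`. -/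
def pvbsProj (g : ℂ) : Matrix (Fin 2 × Fin 2) (Fin 2 × Fin 2) ℂ :=
  outer e11 e11 + outer (psiVec g) (psiVec g)

/-- The embedding of a 4×4 matrix `m` as an operator acting on sites `n`, `n'` of the
`N`-qubit chain: `⟨e_s, m_{n,n'} e_t⟩ = m (s n, s n') (t n, t n')` if `s = t` away from
`{n, n'}`, and `0` otherwise. -/
def twoSite (N : ℕ) (m : Matrix (Fin 2 × Fin 2) (Fin 2 × Fin 2) ℂ) (n n' : Fin N) :
    Matrix (Fin N → Fin 2) (Fin N → Fin 2) ℂ :=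
  fun s t =>
    if ∀ j : Fin N, j ≠ n → j ≠ n' → s j = t j then m (s n, s n') (t n, t n') else 0


/-- The local PVBS-deformed interaction
`a|ψ^(g)⟩⟨ψ^(g)| + b|e₁₁⟩⟨e₁₁| + c|ψ^(g)⟩⟨e₁₁| + conj c |e₁₁⟩⟨ψ^(g)|`. -/
def locMat (a b : ℝ) (c g : ℂ) : Matrix (Fin 2 × Fin 2) (Fin 2 × Fin 2) ℂ :=
  (a : ℂ) • outer (psiVec g) (psiVec g) + (b : ℂ) • outer e11 e11 +
    c • outer (psiVec g) e11 + (starRingEnd ℂ c) • outer e11 (psiVec g)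

/-- The PVBS-deformed Hamiltonian `H = ∑_{n=0}^{N-2} T_{n,n+1}` on the `N`-qubit chain. -/
def pvbsHam (N : ℕ) (a b : ℕ → ℝ) (c : ℕ → ℂ) (g : ℂ) :
    Matrix (Fin N → Fin 2) (Fin N → Fin 2) ℂ :=
  ∑ n : Fin (N - 1),
    twoSite N (locMat (a n) (b n) (c n) g)
      ⟨(n : ℕ), by have := n.isLt; omega⟩ ⟨(n : ℕ) + 1, by have := n.isLt; omega⟩

/-- The reflection operator, `(R v)(s) = v (s ∘ ρ)` with `ρ(j) = N−1−j`. -/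
def reflOp (N : ℕ) (v : NQubit N) : NQubit N := fun s => v (fun j => s (Fin.rev j))

/-- The parity operator, `(Π v)(s) = (−1)^{#{j : s j = 1}} v(s)`. -/
def parityOp (N : ℕ) (v : NQubit N) : NQubit N :=
  fun s => (-1 : ℂ) ^ (Finset.univ.filter fun j : Fin N => s j = 1).card * v s


open Finset

-- The action of `Π ∘ R` on one bond: `R` swaps its two sites and `Π` acts on it as `Z ⊗ Z`.
def paritySwap (v : Fin 2 × Fin 2 → ℂ) : Fin 2 × Fin 2 → ℂ :=
  fun p => (-1) ^ ((p.1 : ℕ) + p.2) * v p.swap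

def paritySwapMat : Matrix (Fin 2 × Fin 2) (Fin 2 × Fin 2) ℂ →ₗ[ℂ]
    Matrix (Fin 2 × Fin 2) (Fin 2 × Fin 2) ℂ where
  toFun m := Matrix.of fun p q => (-1) ^ ((p.1 : ℕ) + p.2 + q.1 + q.2) * m p.swap q.swap
  map_add' m m' := by ext p q; simp only [Matrix.add_apply, Matrix.of_apply]; ring
  map_smul' z m := by
    ext p q; simp only [Matrix.smul_apply, Matrix.of_apply, smul_eq_mul, RingHom.id_apply]; ring

lemma paritySwapMat_outer (v w : Fin 2 × Fin 2 → ℂ) :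
    paritySwapMat (outer v w) = outer (paritySwap v) (paritySwap w) := by
  ext p q
  simp only [paritySwapMat, LinearMap.coe_mk, AddHom.coe_mk, Matrix.of_apply, outer, paritySwap,
    Matrix.vecMulVec_apply, Pi.star_apply, star_mul', star_pow, star_neg, star_one]
  ring

lemma paritySwap_psiVec_one : paritySwap (psiVec 1) = psiVec 1 := by
  ext p
  fin_cases p <;> simp [paritySwap, psiVec, eBasis]

lemma paritySwap_e11 : paritySwap e11 = e11 := by
  ext p
  fin_cases p <;> simp [paritySwap, e11, eBasis]

lemma paritySwapMat_locMat_one (a b : ℝ) (c : ℂ) :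
    paritySwapMat (locMat a b c 1) = locMat a b c 1 := by
  simp only [locMat, map_add, map_smul, paritySwapMat_outer, paritySwap_psiVec_one, paritySwap_e11]

lemma card_filter_eq_one_eq_sum {N : ℕ} (s : Fin N → Fin 2) :
    #{j | s j = 1} = ∑ j, (s j : ℕ) := by
  rw [card_filter]
  have hval : ∀ x : Fin 2, (if x = 1 then 1 else 0) = (x : ℕ) := by decide
  exact sum_congr rfl fun j _ => hval (s j)

lemma neg_one_pow_card_add_card_of_eqOn {N : ℕ} {n n' : Fin N} (hn : n ≠ n')
    {s t : Fin N → Fin 2} (hst : ∀ j, j ≠ n → j ≠ n' → s j = t j) :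
    (-1 : ℂ) ^ (#{j | s j = 1} + #{j | t j = 1}) =
      (-1) ^ ((s n : ℕ) + s n' + t n + t n') := by
  rw [card_filter_eq_one_eq_sum, card_filter_eq_one_eq_sum, ← sum_add_distrib,
    ← sum_sdiff (subset_univ {n, n'}), sum_pair hn, pow_add, Even.neg_one_pow, one_mul]
  · ring_nf
  · refine even_sum _ fun j hj => ?_
    simp only [mem_sdiff, mem_univ, mem_insert, mem_singleton, true_and, not_or] at hj
    rw [hst j hj.1 hj.2]
    exact ⟨_, rfl⟩

def reflConf (N : ℕ) : Equiv.Perm (Fin N → Fin 2) :=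
  Function.Involutive.toPerm (fun s j => s (Fin.rev j)) fun s => by simp

@[simp]
lemma reflConf_apply {N : ℕ} (s : Fin N → Fin 2) (j : Fin N) : reflConf N s j = s j.rev := rfl

lemma reflConf_reflConf {N : ℕ} (s : Fin N → Fin 2) : reflConf N (reflConf N s) = s := by
  ext; simp

lemma card_filter_reflConf {N : ℕ} (s : Fin N → Fin 2) :
    #{j | reflConf N s j = 1} = #{j | s j = 1} := by
  rw [card_filter_eq_one_eq_sum, card_filter_eq_one_eq_sum]
  exact Fintype.sum_equiv Fin.revPerm _ _ fun j => rfl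

lemma twoSite_reflConf {N : ℕ} (m : Matrix (Fin 2 × Fin 2) (Fin 2 × Fin 2) ℂ) (n n' : Fin N)
    (s t : Fin N → Fin 2) :
    twoSite N m n n' (reflConf N s) (reflConf N t) = twoSite N m n.rev n'.rev s t := by
  have hcond : (∀ j, j ≠ n → j ≠ n' → s j.rev = t j.rev) ↔
      ∀ j, j ≠ n.rev → j ≠ n'.rev → s j = t j :=
    Fin.revPerm.forall_congr fun {j} => by simp [Fin.rev_eq_iff]
  simp only [twoSite, reflConf_apply, hcond]

lemma neg_one_pow_mul_twoSite {N : ℕ} (m : Matrix (Fin 2 × Fin 2) (Fin 2 × Fin 2) ℂ)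
    {n n' : Fin N} (hn : n ≠ n') (s t : Fin N → Fin 2) :
    (-1 : ℂ) ^ (#{j | s j = 1} + #{j | t j = 1}) * twoSite N m n n' s t =
      twoSite N (paritySwapMat m) n' n s t := by
  simp only [twoSite]
  by_cases hst : ∀ j, j ≠ n → j ≠ n' → s j = t j
  · have hst' : ∀ j, j ≠ n' → j ≠ n → s j = t j := fun j h' h => hst j h h'
    rw [if_pos hst, if_pos hst', neg_one_pow_card_add_card_of_eqOn hn hst]
    simp only [paritySwapMat, LinearMap.coe_mk, AddHom.coe_mk, Matrix.of_apply, Prod.swap_prod_mk]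
    ring_nf
  · have hst' : ¬ ∀ j, j ≠ n' → j ≠ n → s j = t j := fun h => hst fun j hj hj' => h j hj' hj
    rw [if_neg hst, if_neg hst', mul_zero]

lemma pvbsHam_one_apply_reflConf {N : ℕ} (a b : ℕ → ℝ) (c : ℕ → ℂ)
    (hsym : ∀ n ≤ N - 2, a n = a (N - 2 - n) ∧ b n = b (N - 2 - n) ∧ c n = c (N - 2 - n))
    (s t : Fin N → Fin 2) :
    (-1 : ℂ) ^ (#{j | s j = 1} + #{j | t j = 1}) *
      pvbsHam N a b c 1 (reflConf N s) (reflConf N t) = pvbsHam N a b c 1 s t := by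
  rw [pvbsHam, Matrix.sum_apply, Matrix.sum_apply, mul_sum]
  refine Fintype.sum_equiv Fin.revPerm _ _ fun n => ?_
  have hn := n.isLt
  have hrev : ((Fin.revPerm n : Fin (N - 1)) : ℕ) = N - 2 - n := by
    simp only [Fin.revPerm_apply, Fin.val_rev]; omega
  obtain ⟨ha, hb, hc⟩ := hsym n (by omega)
  have hcoeff : locMat (a n) (b n) (c n) 1 =
      locMat (a (Fin.revPerm n)) (b (Fin.revPerm n)) (c (Fin.revPerm n)) 1 := by
    rw [hrev, ← ha, ← hb, ← hc]
  rw [twoSite_reflConf, neg_one_pow_mul_twoSite _ (by simp [Fin.ext_iff]; omega),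
    paritySwapMat_locMat_one, hcoeff]
  congr 1 <;> ext <;> simp only [Fin.val_rev] <;> omega

lemma parityOp_apply {N : ℕ} (v : NQubit N) (s : Fin N → Fin 2) :
    parityOp N v s = (-1) ^ #{j | s j = 1} * v s := rfl

lemma reflOp_apply {N : ℕ} (v : NQubit N) (s : Fin N → Fin 2) :
    reflOp N v s = v (reflConf N s) := rfl

lemma parityOp_reflOp_mulVec {N : ℕ} (H : Matrix (Fin N → Fin 2) (Fin N → Fin 2) ℂ)
    (hH : ∀ s t, (-1 : ℂ) ^ (#{j | s j = 1} + #{j | t j = 1}) *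
      H (reflConf N s) (reflConf N t) = H s t) (v : NQubit N) :
    parityOp N (reflOp N (H.mulVec (parityOp N (reflOp N v)))) = H.mulVec v := by
  ext s
  simp only [parityOp_apply, reflOp_apply, Matrix.mulVec, dotProduct, mul_sum]
  refine Fintype.sum_equiv (reflConf N) _ _ fun t => ?_
  rw [← hH s (reflConf N t), card_filter_reflConf, reflConf_reflConf, pow_add]
  ring

lemma pvbsHam_two_apply (a b : ℕ → ℝ) (c : ℕ → ℂ) (g : ℂ) (s t : Fin 2 → Fin 2) :
    pvbsHam 2 a b c g s t = locMat (a 0) (b 0) (c 0) g (s 0, s 1) (t 0, t 1) := by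
  simp [pvbsHam, twoSite]

lemma reflConf_eq_one_iff {N : ℕ} (s : Fin N → Fin 2) : reflConf N s = 1 ↔ s = 1 := by
  rw [← (reflConf N).injective.eq_iff, reflConf_reflConf]
  exact ⟨fun h => h ▸ rfl, fun h => by ext; simp [h]⟩

lemma exists_reflOp_pvbsHam_two_ne :
    ∃ v : NQubit 2, reflOp 2 ((pvbsHam 2 0 0 1 1).mulVec (reflOp 2 v)) ≠
      (pvbsHam 2 0 0 1 1).mulVec v := by
  refine ⟨Pi.single 1 1, fun h => ?_⟩
  have hv : reflOp 2 (Pi.single 1 1) = Pi.single 1 1 := by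
    ext s; simp only [reflOp_apply, Pi.single_apply, reflConf_eq_one_iff]
  have hrefl : reflConf 2 ![0, 1] = ![1, 0] := by
    ext j; fin_cases j <;> rfl
  have h01 := congrFun h ![0, 1]
  norm_num [hv, reflOp_apply, hrefl, pvbsHam_two_apply, locMat, outer, psiVec, e11, eBasis,
    Matrix.vecMulVec_apply] at h01
  exact inv_ne_zero (by simp) (by linear_combination (-1 / 2 : ℂ) * h01 : ((√2 : ℝ) : ℂ)⁻¹ = 0)

theorem pvbsHam_parity_reflection_symmetry_one_general (N : ℕ)
    (a b : ℕ → ℝ) (c : ℕ → ℂ)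
    (hsym : ∀ n ≤ N - 2, a n = a (N - 2 - n) ∧ b n = b (N - 2 - n) ∧ c n = c (N - 2 - n)) :
    (∀ v : NQubit N,
      parityOp N (reflOp N
          ((pvbsHam N a b c 1).mulVec (parityOp N (reflOp N v)))) =
        (pvbsHam N a b c 1).mulVec v) ∧
    (∃ (N' : ℕ) (_ : 2 ≤ N') (a' b' : ℕ → ℝ) (c' : ℕ → ℂ),
      (∀ n ≤ N' - 2,
        a' n = a' (N' - 2 - n) ∧ b' n = b' (N' - 2 - n) ∧ c' n = c' (N' - 2 - n)) ∧
      ∃ v : NQubit N',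
        reflOp N' ((pvbsHam N' a' b' c' 1).mulVec (reflOp N' v)) ≠
          (pvbsHam N' a' b' c' 1).mulVec v) :=
  ⟨parityOp_reflOp_mulVec _ (pvbsHam_one_apply_reflConf a b c hsym),
    2, le_rfl, 0, 0, 1, fun _ _ => ⟨rfl, rfl, rfl⟩, exists_reflOp_pvbsHam_two_ne⟩

/-- Combined parity–reflection symmetry of the PVBS-deformed Hamiltonian at the critical
coupling `g = 1` (supplementary material): for reflection-symmetric coefficients,
`(Π ∘ R) ∘ H ∘ (Π ∘ R) = H` — even though in general `R ∘ H ∘ R ≠ H` at `g = 1`. -/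
theorem pvbsHam_parity_reflection_symmetry_one (N : ℕ) (hN : 2 ≤ N)
    (a b : ℕ → ℝ) (c : ℕ → ℂ)
    (hsym : ∀ n ≤ N - 2, a n = a (N - 2 - n) ∧ b n = b (N - 2 - n) ∧ c n = c (N - 2 - n)) :
    (∀ v : NQubit N,
      parityOp N (reflOp N
          ((pvbsHam N a b c 1).mulVec (parityOp N (reflOp N v)))) =
        (pvbsHam N a b c 1).mulVec v) ∧
    (∃ (N' : ℕ) (_ : 2 ≤ N') (a' b' : ℕ → ℝ) (c' : ℕ → ℂ),
      (∀ n ≤ N' - 2,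
        a' n = a' (N' - 2 - n) ∧ b' n = b' (N' - 2 - n) ∧ c' n = c' (N' - 2 - n)) ∧
      ∃ v : NQubit N',
        reflOp N' ((pvbsHam N' a' b' c' 1).mulVec (reflOp N' v)) ≠
          (pvbsHam N' a' b' c' 1).mulVec v) :=
  pvbsHam_parity_reflection_symmetry_one_general N a b c hsym
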